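/- arXiv:1803.03527 — 2 statements merged into one kernel-verified Lean document; each statement's English description precedes it below -/
import Mathlib

section
/- Let G be a minimal non-DP-(3,1)*-colorable graph, i.e., a finite simple graph that is not DP-(3,1)*-colorable but every graph obtained from G by deleting a nonempty set of vertices is DP-(3,1)*-colorable. Then every vertex of G has degree at least 3. -/
/-- A cover `H` of a graph `G` with respect to a list assignment `L`.
The vertex set of the cover is modeled as the fibers `{u} × L u` inside `V × α`;
all edges of `H` are required to lie inside these fibers. -/
structure DPCover {V α : Type*} (G : SimpleGraph V) (L : V → Finset α)
    (H : SimpleGraph (V × α)) : Prop where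
  mem_of_adj : ∀ (u v : V) (c c' : α), H.Adj (u, c) (v, c') → c ∈ L u ∧ c' ∈ L v
  fiber_complete : ∀ (u : V) (c c' : α), c ∈ L u → c' ∈ L u → c ≠ c' →
    H.Adj (u, c) (u, c')
  matching : ∀ (u v : V), u ≠ v → ∀ (c c' c'' : α),
    H.Adj (u, c) (v, c') → H.Adj (u, c) (v, c'') → c' = c''
  no_edge : ∀ (u v : V), u ≠ v → ¬ G.Adj u v → ∀ (c c' : α), ¬ H.Adj (u, c) (v, c')

/-- `S` is a 1-representative set for a cover `H`: it consists of vertices of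
the cover, has size `|V(G)|`, contains at most one vertex from each fiber, and
induces a subgraph of `H` of maximum degree at most 1. -/
def IsRepSet {V α : Type*} [Fintype V] (L : V → Finset α)
    (H : SimpleGraph (V × α)) (d : ℕ) (S : Finset (V × α)) : Prop :=
  (∀ p ∈ S, p.2 ∈ L p.1) ∧ S.card = Fintype.card V ∧
    (∀ (u : V) (c c' : α), (u, c) ∈ S → (u, c') ∈ S → c = c') ∧
    ∀ p ∈ S, {q ∈ (S : Set (V × α)) | H.Adj p q}.ncard ≤ d

/-- `G` is DP-`(3,1)*`-colorable: for every list assignment `L` with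
`|L(v)| = 3` for all `v` and every cover `H` of `G` with respect to `L`,
there is a 1-representative set. -/
def DPColorable31 {W : Type*} [Fintype W] (G : SimpleGraph W) : Prop :=
  ∀ L : W → Finset ℕ, (∀ v : W, (L v).card = 3) →
    ∀ H : SimpleGraph (W × ℕ), DPCover G L H →
      ∃ S : Finset (W × ℕ), IsRepSet L H 1 S

/-! A vertex of degree less than its list size extends every representative set of the rest of
the graph: each chosen neighbour of `v` is matched to at most one vertex of the fiber of `v`,
so some colour of `v` has no neighbour in the set. Hence if `v` had degree at most 2 in a
minimal counterexample `G`, every 1-representative set of `G - v` would extend to one of `G`. -/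

section

variable {V α : Type*} {G : SimpleGraph V} {L : V → Finset α} {H : SimpleGraph (V × α)}

structure IsPartialRepSet (L : V → Finset α) (H : SimpleGraph (V × α)) (d : ℕ)
    (S : Finset (V × α)) : Prop where
  mem_list : ∀ p ∈ S, p.2 ∈ L p.1
  eq_of_mem : ∀ (u : V) (c c' : α), (u, c) ∈ S → (u, c') ∈ S → c = c'
  ncard_adj_le : ∀ p ∈ S, {q ∈ (S : Set (V × α)) | H.Adj p q}.ncard ≤ d

theorem isRepSet_iff [Fintype V] {d : ℕ} {S : Finset (V × α)} :
    IsRepSet L H d S ↔ IsPartialRepSet L H d S ∧ S.card = Fintype.card V :=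
  ⟨fun ⟨h₁, h₂, h₃, h₄⟩ => ⟨⟨h₁, h₃, h₄⟩, h₂⟩, fun ⟨⟨h₁, h₃, h₄⟩, h₂⟩ => ⟨h₁, h₂, h₃, h₄⟩⟩

variable (α) in
def subtypeProdEmb (s : Set V) : s × α ↪ V × α :=
  (Function.Embedding.subtype (· ∈ s)).prodMap (Function.Embedding.refl α)

@[simp]
theorem subtypeProdEmb_apply (s : Set V) (p : s × α) : subtypeProdEmb α s p = (p.1.1, p.2) :=
  rfl

theorem DPCover.restrict (hH : DPCover G L H) (s : Set V) :
    DPCover (G.induce s) (fun u => L u) (H.comap (subtypeProdEmb α s)) where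
  mem_of_adj u w c c' h := hH.mem_of_adj u w c c' h
  fiber_complete u c c' hc hc' hne := hH.fiber_complete u c c' hc hc' hne
  matching u w hne c c' c'' h h' := hH.matching u w (Subtype.coe_ne_coe.mpr hne) c c' c'' h h'
  no_edge u w hne hnadj c c' h := hH.no_edge u w (Subtype.coe_ne_coe.mpr hne) hnadj c c' h

theorem IsPartialRepSet.map_subtypeProdEmb {s : Set V} {d : ℕ} {S : Finset (s × α)}
    (hS : IsPartialRepSet (fun u : s => L u) (H.comap (subtypeProdEmb α s)) d S) :
    IsPartialRepSet L H d (S.map (subtypeProdEmb α s)) where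
  mem_list := by
    simp only [Finset.forall_mem_map, subtypeProdEmb_apply]
    exact hS.mem_list
  eq_of_mem u c c' hc hc' := by
    obtain ⟨⟨w, c₁⟩, hw, hwe⟩ := Finset.mem_map.mp hc
    obtain ⟨⟨w', c₂⟩, hw', hwe'⟩ := Finset.mem_map.mp hc'
    simp only [subtypeProdEmb_apply, Prod.mk.injEq] at hwe hwe'
    obtain ⟨rfl, rfl⟩ := hwe
    obtain ⟨hww', rfl⟩ := hwe'
    obtain rfl := Subtype.ext hww'.symm
    exact hS.eq_of_mem w c₁ c₂ hw hw'
  ncard_adj_le := by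
    simp only [Finset.forall_mem_map]
    intro p hp
    have himage : {q ∈ ((S.map (subtypeProdEmb α s) : Finset (V × α)) : Set (V × α)) |
        H.Adj (subtypeProdEmb α s p) q} =
        subtypeProdEmb α s ''
          {q ∈ (S : Set (s × α)) | (H.comap (subtypeProdEmb α s)).Adj p q} := by
      ext q
      simp only [Finset.coe_map, Set.mem_image, Finset.mem_coe, Set.mem_ofPred_eq,
        SimpleGraph.comap_adj]
      constructor
      · rintro ⟨⟨q', hq', rfl⟩, hadj⟩
        exact ⟨q', ⟨hq', hadj⟩, rfl⟩
      · rintro ⟨q', ⟨hq', hadj⟩, rfl⟩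
        exact ⟨⟨q', hq', rfl⟩, hadj⟩
    rw [himage, Set.ncard_image_of_injective _ (subtypeProdEmb α s).injective]
    exact hS.ncard_adj_le p hp

theorem IsPartialRepSet.insert_of_forall_not_adj [DecidableEq V] [DecidableEq α] {d : ℕ}
    {S : Finset (V × α)} (hS : IsPartialRepSet L H d S) {v : V} {c : α} (hc : c ∈ L v)
    (hv : ∀ p ∈ S, p.1 ≠ v)
    (hfree : ∀ p ∈ S, ¬ H.Adj (v, c) p) : IsPartialRepSet L H d (insert (v, c) S) where
  mem_list := Finset.forall_mem_insert _ _ _ |>.mpr ⟨hc, hS.mem_list⟩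
  eq_of_mem u c₁ c₂ h₁ h₂ := by
    rcases Finset.mem_insert.mp h₁ with h₁ | h₁ <;> rcases Finset.mem_insert.mp h₂ with h₂ | h₂
    · simp_all
    · simp only [Prod.mk.injEq] at h₁; exact absurd h₁.1 (hv _ h₂)
    · simp only [Prod.mk.injEq] at h₂; exact absurd h₂.1 (hv _ h₁)
    · exact hS.eq_of_mem u c₁ c₂ h₁ h₂
  ncard_adj_le := by
    refine Finset.forall_mem_insert _ _ _ |>.mpr ⟨?_, fun p hp => ?_⟩
    · have hempty : {q ∈ ((insert (v, c) S : Finset (V × α)) : Set (V × α)) |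
          H.Adj (v, c) q} = ∅ := by
        ext q
        simp only [Finset.coe_insert, Set.mem_insert_iff, Finset.mem_coe, Set.mem_ofPred_eq,
          Set.mem_empty_iff_false, iff_false, not_and]
        rintro (rfl | hq)
        exacts [H.irrefl, hfree q hq]
      rw [hempty, Set.ncard_empty]
      exact d.zero_le
    · have hsame : {q ∈ ((insert (v, c) S : Finset (V × α)) : Set (V × α)) | H.Adj p q} =
          {q ∈ (S : Set (V × α)) | H.Adj p q} := by
        ext q
        simp only [Finset.coe_insert, Set.mem_insert_iff, Finset.mem_coe, Set.mem_ofPred_eq]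
        constructor
        · rintro ⟨rfl | hq, hadj⟩
          exacts [absurd hadj.symm (hfree p hp), ⟨hq, hadj⟩]
        · exact fun ⟨hq, hadj⟩ => ⟨Or.inr hq, hadj⟩
      rw [hsame]
      exact hS.ncard_adj_le p hp

namespace DPCover

theorem card_blocked_le_degree (hH : DPCover G L H) {S : Finset (V × α)}
    (hS : ∀ (u : V) (c c' : α), (u, c) ∈ S → (u, c') ∈ S → c = c') {v : V}
    (hv : ∀ p ∈ S, p.1 ≠ v) [Fintype (G.neighborSet v)] [DecidableRel H.Adj] :
    {c ∈ L v | ∃ p ∈ S, H.Adj (v, c) p}.card ≤ G.degree v := by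
  refine Finset.card_le_card_of_forall_subsingleton
    (fun c u => ∃ c', (u, c') ∈ S ∧ H.Adj (v, c) (u, c')) ?_ ?_
  · simp only [Finset.mem_filter, SimpleGraph.mem_neighborFinset]
    rintro c ⟨-, ⟨u, c'⟩, hp, hadj⟩
    refine ⟨u, ?_, c', hp, hadj⟩
    by_contra hnadj
    exact hH.no_edge v u (hv _ hp).symm hnadj c c' hadj
  · rintro u hu c₁ ⟨-, c₁', h₁, hadj₁⟩ c₂ ⟨-, c₂', h₂, hadj₂⟩
    obtain rfl := hS u c₁' c₂' h₁ h₂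
    have hne : u ≠ v := hv _ h₁
    exact hH.matching u v hne c₁' c₁ c₂ hadj₁.symm hadj₂.symm

theorem exists_free_color (hH : DPCover G L H) {S : Finset (V × α)}
    (hS : ∀ (u : V) (c c' : α), (u, c) ∈ S → (u, c') ∈ S → c = c') {v : V}
    (hv : ∀ p ∈ S, p.1 ≠ v) [Fintype (G.neighborSet v)] (hdeg : G.degree v < (L v).card) :
    ∃ c ∈ L v, ∀ p ∈ S, ¬ H.Adj (v, c) p := by
  classical
  obtain ⟨c, hc, hblocked⟩ := Finset.exists_mem_notMem_of_card_lt_card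
    (hdeg.trans_le' (hH.card_blocked_le_degree hS hv))
  exact ⟨c, hc, fun p hp hadj => hblocked (Finset.mem_filter.mpr ⟨hc, p, hp, hadj⟩)⟩

theorem exists_isRepSet_of_degree_lt [Fintype V] [DecidableEq V] [DecidableEq α]
    (hH : DPCover G L H) {v : V} [Fintype (G.neighborSet v)] (hdeg : G.degree v < (L v).card)
    {s : Set V} [Fintype s] (hs : ∀ x, x ∈ s ↔ x ≠ v) {d : ℕ}
    (hrep : ∃ S, IsRepSet (fun u : s => L u) (H.comap (subtypeProdEmb α s)) d S) :
    ∃ S, IsRepSet L H d S := by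
  obtain ⟨S', hrep'⟩ := hrep
  obtain ⟨hS', hcard'⟩ := isRepSet_iff.mp hrep'
  set S := S'.map (subtypeProdEmb α s)
  have hS : IsPartialRepSet L H d S := hS'.map_subtypeProdEmb
  have hv : ∀ p ∈ S, p.1 ≠ v := by
    simp only [S, Finset.forall_mem_map, subtypeProdEmb_apply]
    exact fun p _ => (hs p.1).mp p.1.2
  obtain ⟨c, hc, hfree⟩ := hH.exists_free_color hS.eq_of_mem hv hdeg
  refine ⟨insert (v, c) S, isRepSet_iff.mpr ⟨hS.insert_of_forall_not_adj hc hv hfree, ?_⟩⟩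
  have hcard_s : Fintype.card s + 1 = Fintype.card V := by
    rw [Fintype.card_congr (Equiv.subtypeEquivRight hs)]
    simpa using Nat.sub_add_cancel (Fintype.card_pos_iff.mpr ⟨v⟩)
  rw [Finset.card_insert_of_notMem fun h => hv _ h rfl, Finset.card_map, hcard', hcard_s]

end DPCover

end

/-- If `G` is a minimal non-DP-`(3,1)*`-colorable graph (not DP-`(3,1)*`-colorable,
but every graph obtained from `G` by deleting a nonempty set of vertices is
DP-`(3,1)*`-colorable), then every vertex of `G` has degree at least 3. -/
theorem minimal_degree_ge_three
    {V : Type*} [Fintype V] [DecidableEq V]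
    (G : SimpleGraph V) [DecidableRel G.Adj]
    (hnot : ¬ DPColorable31 G)
    (hmin : ∀ s : Finset V, s.Nonempty →
      DPColorable31 (G.induce ((sᶜ : Finset V) : Set V)))
    (v : V) : 3 ≤ G.degree v := by
  by_contra! hdeg
  refine hnot fun L hL H hH => ?_
  have hrep := hmin {v} (Finset.singleton_nonempty v) _ (fun u => hL u) _ (hH.restrict _)
  exact hH.exists_isRepSet_of_degree_lt (hL v ▸ hdeg) (by simp) hrep
end

section
/- Let G be a minimal non-DP-(3,1)*-colorable graph, i.e., a finite simple graph that is not DP-(3,1)*-colorable but every graph obtained from G by deleting a nonempty set of vertices is DP-(3,1)*-colorable. Then no two vertices of degree 3 in G are adjacent; equivalently, every neighbor of a 3-vertex of G has degree at least 4. -/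
/-
Delete the two adjacent 3-vertices `u` and `v`; by minimality the rest of the cover has a
1-representative set `S₀`. Each of `u`, `v` has exactly two neighbours left in `G - {u, v}`,
and by the matching condition each of their representatives blocks at most one colour of the
fiber of `u` (resp. `v`). So `u` and `v` keep a colour with no neighbour in `S₀`; adding these
two vertices to `S₀` yields a 1-representative set of the whole cover, in which they can only
see each other.
-/

open Finset

section

variable {V α : Type*}

/-- `IsRepSet` without the size condition, so `S` may miss whole fibers. -/
structure IsPartialRepSet_s9 (L : V → Finset α) (H : SimpleGraph (V × α)) (d : ℕ)
    (S : Finset (V × α)) : Prop where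
  mem_list : ∀ p ∈ S, p.2 ∈ L p.1
  injOn_fst : Set.InjOn Prod.fst (S : Set (V × α))
  ncard_adj_le : ∀ p ∈ S, {q ∈ (S : Set (V × α)) | H.Adj p q}.ncard ≤ d

section RepSets

variable {L : V → Finset α} {H : SimpleGraph (V × α)} {d : ℕ}

theorem IsRepSet.isPartialRepSet [Fintype V] {S : Finset (V × α)} (h : IsRepSet L H d S) :
    IsPartialRepSet_s9 L H d S :=
  ⟨h.1, fun _ hp _ hq heq => Prod.ext heq (h.2.2.1 _ _ _ hp (heq ▸ hq)), h.2.2.2⟩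

theorem IsRepSet.image_fst_eq_univ [Fintype V] [DecidableEq V] {S : Finset (V × α)}
    (h : IsRepSet L H d S) : S.image Prod.fst = univ :=
  eq_univ_of_card _ <| by rw [card_image_of_injOn h.isPartialRepSet.injOn_fst, h.2.1]

theorem IsPartialRepSet_s9.isRepSet [Fintype V] [DecidableEq V] {S : Finset (V × α)}
    (h : IsPartialRepSet_s9 L H d S) (hS : S.image Prod.fst = univ) : IsRepSet L H d S := by
  refine ⟨h.mem_list, ?_, fun u c c' hc hc' => congrArg Prod.snd (h.injOn_fst hc hc' rfl),
    h.ncard_adj_le⟩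
  rw [← card_image_of_injOn h.injOn_fst, hS, card_univ]

theorem IsPartialRepSet_s9.union [DecidableEq V] [DecidableEq α] {S₁ S₂ : Finset (V × α)}
    (h₁ : IsPartialRepSet_s9 L H d S₁) (h₂ : IsPartialRepSet_s9 L H d S₂)
    (hdisj : Disjoint (S₁.image Prod.fst) (S₂.image Prod.fst))
    (hH : ∀ p ∈ S₁, ∀ q ∈ S₂, ¬ H.Adj p q) : IsPartialRepSet_s9 L H d (S₁ ∪ S₂) where
  mem_list p hp := (mem_union.mp hp).elim (h₁.mem_list p) (h₂.mem_list p)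
  injOn_fst := by
    rw [coe_union, Set.injOn_union (disjoint_coe.mpr hdisj.of_image_finset)]
    refine ⟨h₁.injOn_fst, h₂.injOn_fst, fun p hp q hq heq => ?_⟩
    exact disjoint_left.mp hdisj (mem_image_of_mem _ hp) (heq ▸ mem_image_of_mem _ hq)
  ncard_adj_le p hp := by
    rcases mem_union.mp hp with hp | hp
    · have hsub : {q ∈ ((S₁ ∪ S₂ : Finset (V × α)) : Set (V × α)) | H.Adj p q} ⊆
          {q ∈ (S₁ : Set (V × α)) | H.Adj p q} :=
        fun q ⟨hq, hpq⟩ => ⟨(mem_union.mp hq).resolve_right fun hq => hH p hp q hq hpq, hpq⟩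
      exact (Set.ncard_le_ncard hsub (S₁.finite_toSet.sep _)).trans (h₁.ncard_adj_le p hp)
    · have hsub : {q ∈ ((S₁ ∪ S₂ : Finset (V × α)) : Set (V × α)) | H.Adj p q} ⊆
          {q ∈ (S₂ : Set (V × α)) | H.Adj p q} :=
        fun q ⟨hq, hpq⟩ => ⟨(mem_union.mp hq).resolve_left fun hq => hH q hq p hp hpq.symm, hpq⟩
      exact (Set.ncard_le_ncard hsub (S₂.finite_toSet.sep _)).trans (h₂.ncard_adj_le p hp)

theorem isPartialRepSet_pair [DecidableEq V] [DecidableEq α] {x y : V} {c c' : α} (hxy : x ≠ y)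
    (hc : c ∈ L x) (hc' : c' ∈ L y) : IsPartialRepSet_s9 L H 1 {(x, c), (y, c')} where
  mem_list p hp := by
    rcases mem_insert.mp hp with rfl | hp
    · exact hc
    · exact mem_singleton.mp hp ▸ hc'
  injOn_fst p hp q hq heq := by
    simp only [coe_insert, coe_singleton, Set.mem_insert_iff, Set.mem_singleton_iff] at hp hq
    rcases hp with rfl | rfl <;> rcases hq with rfl | rfl <;> simp_all [eq_comm]
  ncard_adj_le p hp := by
    have hsub : {q ∈ (({(x, c), (y, c')} : Finset (V × α)) : Set (V × α)) | H.Adj p q} ⊆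
        ↑(({(x, c), (y, c')} : Finset (V × α)).erase p) :=
      fun q ⟨hq, hpq⟩ => mem_erase.mpr ⟨hpq.ne', hq⟩
    refine (Set.ncard_le_ncard hsub (finite_toSet _)).trans ?_
    rw [Set.ncard_coe_finset, card_erase_of_mem hp, card_pair (by simp [hxy])]

end RepSets

def subtypeProdEmbedding (T : Set V) (α : Type*) : T × α ↪ V × α :=
  (Function.Embedding.subtype (· ∈ T)).prodMap (Function.Embedding.refl α)

section Cover

variable {G : SimpleGraph V} {L : V → Finset α} {H : SimpleGraph (V × α)}

theorem DPCover.induce (hH : DPCover G L H) (T : Set V) :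
    DPCover (G.induce T) (fun w : T => L w) (H.comap (subtypeProdEmbedding T α)) where
  mem_of_adj u v c c' h := hH.mem_of_adj u v c c' h
  fiber_complete u c c' hc hc' hne := hH.fiber_complete u c c' hc hc' hne
  matching u v huv c c' c'' h h' := hH.matching u v (Subtype.coe_ne_coe.mpr huv) c c' c'' h h'
  no_edge u v huv hG c c' := hH.no_edge u v (Subtype.coe_ne_coe.mpr huv) hG c c'

theorem IsPartialRepSet_s9.map_subtype {T : Set V} {d : ℕ} {S : Finset (T × α)}
    (h : IsPartialRepSet_s9 (fun w : T => L w) (H.comap (subtypeProdEmbedding T α)) d S) :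
    IsPartialRepSet_s9 L H d (S.map (subtypeProdEmbedding T α)) where
  mem_list := by
    simp only [mem_map]
    rintro _ ⟨p, hp, rfl⟩
    exact h.mem_list p hp
  injOn_fst := by
    simp only [coe_map]
    rintro _ ⟨p, hp, rfl⟩ _ ⟨q, hq, rfl⟩ heq
    exact congrArg _ (h.injOn_fst hp hq (Subtype.ext heq))
  ncard_adj_le := by
    simp only [mem_map]
    rintro _ ⟨p, hp, rfl⟩
    have himage : {q ∈ (S.map (subtypeProdEmbedding T α) : Set (V × α)) |
        H.Adj (subtypeProdEmbedding T α p) q} = subtypeProdEmbedding T α ''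
          {q ∈ (S : Set (T × α)) | (H.comap (subtypeProdEmbedding T α)).Adj p q} := by
      ext q
      simp only [coe_map, Set.mem_ofPred_eq, Set.mem_image, SimpleGraph.comap_adj]
      constructor
      · rintro ⟨⟨q, hq, rfl⟩, hpq⟩
        exact ⟨q, ⟨hq, hpq⟩, rfl⟩
      · rintro ⟨q, ⟨hq, hpq⟩, rfl⟩
        exact ⟨⟨q, hq, rfl⟩, hpq⟩
    rw [himage, Set.ncard_image_of_injective _ (subtypeProdEmbedding T α).injective]
    exact h.ncard_adj_le p hp

theorem IsRepSet.coe_image_fst_map_subtype [DecidableEq V] {T : Set V} [Fintype T] {d : ℕ}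
    {L' : T → Finset α} {H' : SimpleGraph (T × α)} {S : Finset (T × α)}
    (h : IsRepSet L' H' d S) :
    (((S.map (subtypeProdEmbedding T α)).image Prod.fst : Finset V) : Set V) = T := by
  ext x
  simp only [coe_image, coe_map, Set.mem_image, mem_coe]
  constructor
  · rintro ⟨_, ⟨p, -, rfl⟩, rfl⟩
    exact p.1.2
  · intro hx
    obtain ⟨p, hp, hpx⟩ := mem_image.mp (h.image_fst_eq_univ ▸ mem_univ (⟨x, hx⟩ : T))
    exact ⟨_, ⟨p, hp, rfl⟩, congrArg Subtype.val hpx⟩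

theorem DPCover.exists_mem_forall_not_adj [DecidableEq V] (hH : DPCover G L H)
    {S : Finset (V × α)} (hS : Set.InjOn Prod.fst (S : Set (V × α))) {x : V}
    [Fintype (G.neighborSet x)] (hx : x ∉ S.image Prod.fst)
    (hlt : #(G.neighborFinset x ∩ S.image Prod.fst) < #(L x)) :
    ∃ c ∈ L x, ∀ p ∈ S, ¬ H.Adj (x, c) p := by
  classical
  set blocked := (L x).filter fun c => ∃ p ∈ S, H.Adj (x, c) p
  set blockedBy := fun w => (L x).filter fun c => ∃ c', (w, c') ∈ S ∧ H.Adj (x, c) (w, c')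
  have hsub : blocked ⊆ (G.neighborFinset x ∩ S.image Prod.fst).biUnion blockedBy := by
    simp only [blocked, blockedBy, subset_iff, mem_filter, mem_biUnion, mem_inter,
      SimpleGraph.mem_neighborFinset, mem_image]
    rintro c ⟨hc, ⟨w, c'⟩, hp, hadj⟩
    have hwx : w ≠ x := fun hwx => hx (mem_image.mpr ⟨_, hp, hwx⟩)
    have hG : G.Adj x w := by
      by_contra hG
      exact hH.no_edge x w hwx.symm hG c c' hadj
    exact ⟨w, ⟨hG, _, hp, rfl⟩, hc, c', hp, hadj⟩
  -- `S` meets the fiber of `w` once, and that vertex has at most one neighbour over `x`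
  have hle : ∀ w ∈ G.neighborFinset x ∩ S.image Prod.fst, #(blockedBy w) ≤ 1 := by
    intro w hw
    refine card_le_one.mpr fun c₁ hc₁ c₂ hc₂ => ?_
    obtain ⟨-, c₁', hp₁, hadj₁⟩ := mem_filter.mp hc₁
    obtain ⟨-, c₂', hp₂, hadj₂⟩ := mem_filter.mp hc₂
    obtain rfl : c₁' = c₂' := congrArg Prod.snd (hS hp₁ hp₂ rfl)
    exact hH.matching w x (fun hwx => hx (mem_image.mpr ⟨_, hp₁, hwx⟩)) c₁' c₁ c₂
      hadj₁.symm hadj₂.symm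
  have hlt' : #blocked < #(L x) := calc
    #blocked ≤ #(G.neighborFinset x ∩ S.image Prod.fst) * 1 :=
      (card_le_card hsub).trans (card_biUnion_le_card_mul _ _ _ hle)
    _ < #(L x) := by rwa [mul_one]
  obtain ⟨c, hc⟩ := exists_mem_notMem_of_card_lt_card hlt'
  exact ⟨c, hc.1, fun p hp hadj => hc.2 (mem_filter.mpr ⟨hc.1, p, hp, hadj⟩)⟩

end Cover

theorem SimpleGraph.card_neighborFinset_inter_lt_degree [DecidableEq V] {G : SimpleGraph V}
    {u v : V} [Fintype (G.neighborSet u)] (huv : G.Adj u v) {s : Finset V} (hv : v ∉ s) :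
    #(G.neighborFinset u ∩ s) < G.degree u := by
  rw [← card_neighborFinset_eq_degree]
  exact card_lt_card ⟨inter_subset_left, fun h => hv (mem_of_mem_inter_right
    (h ((G.mem_neighborFinset u v).mpr huv)))⟩

end

/-- If `G` is a minimal non-DP-`(3,1)*`-colorable graph (not DP-`(3,1)*`-colorable,
but every graph obtained from `G` by deleting a nonempty set of vertices is
DP-`(3,1)*`-colorable), then no two vertices of degree 3 in `G` are adjacent;
equivalently, every neighbor of a 3-vertex has degree at least 4. -/
theorem minimal_no_adjacent_three_vertices
    {V : Type*} [Fintype V] [DecidableEq V]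
    (G : SimpleGraph V) [DecidableRel G.Adj]
    (hnot : ¬ DPColorable31 G)
    (hmin : ∀ s : Finset V, s.Nonempty →
      DPColorable31 (G.induce ((sᶜ : Finset V) : Set V)))
    (u v : V) (huv : G.Adj u v) :
    ¬ (G.degree u = 3 ∧ G.degree v = 3) := by
  rintro ⟨hdu, hdv⟩
  apply hnot
  intro L hL H hH
  set T : Finset V := {u, v}ᶜ
  obtain ⟨S', hS'⟩ := hmin {u, v} (insert_nonempty _ _) _ (fun w => hL w) _ (hH.induce T)
  set S₀ := S'.map (subtypeProdEmbedding (T : Set V) ℕ)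
  have hS₀ : IsPartialRepSet_s9 L H 1 S₀ := hS'.isPartialRepSet.map_subtype
  have hsupp : S₀.image Prod.fst = T := coe_inj.mp hS'.coe_image_fst_map_subtype
  have hu : u ∉ T := by simp [T]
  have hv : v ∉ T := by simp [T]
  obtain ⟨cu, hcu, hcuS₀⟩ := hH.exists_mem_forall_not_adj hS₀.injOn_fst (hsupp ▸ hu)
    (by rw [hsupp, hL, ← hdu]; exact G.card_neighborFinset_inter_lt_degree huv hv)
  obtain ⟨cv, hcv, hcvS₀⟩ := hH.exists_mem_forall_not_adj hS₀.injOn_fst (hsupp ▸ hv)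
    (by rw [hsupp, hL, ← hdv]; exact G.card_neighborFinset_inter_lt_degree huv.symm hu)
  have hpair : ({(u, cu), (v, cv)} : Finset (V × ℕ)).image Prod.fst = {u, v} := by simp
  refine ⟨_, (hS₀.union (isPartialRepSet_pair huv.ne hcu hcv) ?_ ?_).isRepSet ?_⟩
  · rw [hsupp, hpair]
    exact disjoint_compl_left
  · rintro p hp q hq hpq
    rcases mem_insert.mp hq with rfl | hq
    · exact hcuS₀ p hp hpq.symm
    · exact hcvS₀ p hp (mem_singleton.mp hq ▸ hpq.symm)
  · rw [image_union, hsupp, hpair, union_comm, union_compl]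
end
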